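/- Let D = (V, A, ψ) be a multidigraph, let s, t ∈ V, and let k ∈ ℕ. Let P and Q be two nonempty subsets of V with V = P ⊔ Q, and let C be a subset of A(P,Q). Then the map E ↦ E ∪ C is a bijection from X_{k−|C|}^{P,Q} to {B ∈ U_k : S(B) = P and B ∩ A(P,Q) = C}, with inverse B ↦ B \ C; in particular these two sets have the same cardinality. -/

import Mathlib

/-!
A multidigraph is given by two finite types `V` (vertices) and `A` (arcs)
together with a map `ψ : A → V × V` sending each arc to its (source, target) pair.
For a subset `B ⊆ A`, the induced subdigraph `D⟨B⟩` has vertex set `V` and arc set `B`.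
-/

/-- There is an arc of `B` from `v` to `w` in the subdigraph `D⟨B⟩`. -/
def ArcStep {V A : Type*} (ψ : A → V × V) (B : Set A) (v w : V) : Prop :=
  ∃ a ∈ B, ψ a = (v, w)

/-- `v` can `B`-reach `w`: the subdigraph `D⟨B⟩` has a walk from `v` to `w`. -/
def CanReach {V A : Type*} (ψ : A → V × V) (B : Set A) (v w : V) : Prop :=
  Relation.ReflTransGen (ArcStep ψ B) v w

/-- `B ⊆ A` is acyclic: the subdigraph `D⟨B⟩` has no directed cycles
(equivalently, no closed walk of positive length). -/
def IsAcyclic {V A : Type*} (ψ : A → V × V) (B : Set A) : Prop :=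
  ∀ v : V, ¬ Relation.TransGen (ArcStep ψ B) v v

/-- `B` is an `s`-convergence: `B` is acyclic and `s` is a to-root of `D⟨B⟩`,
i.e. every vertex can `B`-reach `s`. -/
def IsConvergence {V A : Type*} (ψ : A → V × V) (B : Set A) (s : V) : Prop :=
  IsAcyclic ψ B ∧ ∀ v : V, CanReach ψ B v s

/-- `γ_k(s)`: the number of `s`-convergences of size `k`. -/
noncomputable def gammaCount {V A : Type*} (ψ : A → V × V) (k : ℕ) (s : V) : ℕ :=
  {B : Set A | IsConvergence ψ B s ∧ B.ncard = k}.ncard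

/-- The attraction basin of `s` with respect to `B`: all vertices that can `B`-reach `s`. -/
def basin {V A : Type*} (ψ : A → V × V) (B : Set A) (s : V) : Set V :=
  {v : V | CanReach ψ B v s}

/-- `A(P,Q)`: the set of arcs with source in `P` and target in `Q`. -/
def arcsFromTo {V A : Type*} (ψ : A → V × V) (P Q : Set V) : Set A :=
  {a : A | (ψ a).1 ∈ P ∧ (ψ a).2 ∈ Q}

/-- The outdegree of a vertex: the number of arcs with source `v`. -/
noncomputable def outDeg {V A : Type*} (ψ : A → V × V) (v : V) : ℕ :=
  {a : A | (ψ a).1 = v}.ncard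

/-- The indegree of a vertex: the number of arcs with target `v`. -/
noncomputable def inDeg {V A : Type*} (ψ : A → V × V) (v : V) : ℕ :=
  {a : A | (ψ a).2 = v}.ncard

/-- The digraph is balanced: each vertex has outdegree equal to indegree. -/
def IsBalanced {V A : Type*} (ψ : A → V × V) : Prop :=
  ∀ v : V, outDeg ψ v = inDeg ψ v

/-- `U_k`: the set of all acyclic `k`-element subsets `B` of `A` such that each
vertex can `B`-reach `s` or can `B`-reach `t`. -/
def Uset {V A : Type*} (ψ : A → V × V) (s t : V) (k : ℕ) : Set (Set A) :=
  {B : Set A | IsAcyclic ψ B ∧ B.ncard = k ∧ basin ψ B s ∪ basin ψ B t = Set.univ}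

/-- `X_i^{P,Q}`: the set of all acyclic `i`-element subsets `B` of `A` with
`S(B) = P` and `T(B) = Q` (empty for negative `i`). -/
def Xset {V A : Type*} (ψ : A → V × V) (s t : V) (P Q : Set V) (i : ℤ) : Set (Set A) :=
  {B : Set A | IsAcyclic ψ B ∧ (B.ncard : ℤ) = i ∧ basin ψ B s = P ∧ basin ψ B t = Q}

/-- `|X_i^{P,Q}|`. -/
noncomputable def Xcount {V A : Type*} (ψ : A → V × V) (s t : V) (P Q : Set V) (i : ℤ) : ℕ :=
  (Xset ψ s t P Q i).ncard

/-!
Put `Q = Pᶜ`. If `S(B) = P`, no arc of `B` enters `P` from `Q`, so a `B`-walk whose ends lie on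
the same side of the cut never crosses it and in particular uses no arc of `C ⊆ A(P,Q)`. This
transfers acyclicity and the basins of `s` and `t` between `E` and `E ∪ C`. Dually, `T(E) = Q`
means that no arc of `E` enters `Q` from `P`, so `E` is disjoint from `C`.
-/

open Relation Set

theorem Relation.ReflTransGen.closed' {α : Type*} {r : α → α → Prop} {p : α → Prop}
    (dc : ∀ ⦃a b⦄, r a b → p b → p a) {a b : α} (h : ReflTransGen r a b) : p b → p a :=
  h.head_induction_on id fun hr _ hi ↦ dc hr ∘ hi

section Relation
variable {α : Type*} {r r' : α → α → Prop} {p : α → Prop} {a b : α}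

/-- A walk leaves a set that is closed backwards along `r` at most once, so not at all if its ends
agree on it. -/
theorem Relation.TransGen.mono_of_closed' (dc : ∀ ⦃a b⦄, r a b → p b → p a)
    (hr' : ∀ ⦃a b⦄, r a b → (p a ↔ p b) → r' a b) (h : TransGen r a b) (hab : p a ↔ p b) :
    TransGen r' a b := by
  induction h with
  | single hab' => exact .single (hr' hab' hab)
  | tail hac hcb ih =>
    have hca := hac.to_reflTransGen.closed' dc
    have hbc := dc hcb
    exact .tail (ih (by tauto)) (hr' hcb (by tauto))

theorem Relation.ReflTransGen.mono_of_closed' (dc : ∀ ⦃a b⦄, r a b → p b → p a)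
    (hr' : ∀ ⦃a b⦄, r a b → (p a ↔ p b) → r' a b) (h : ReflTransGen r a b) (hab : p a ↔ p b) :
    ReflTransGen r' a b := by
  rcases reflTransGen_iff_eq_or_transGen.1 h with rfl | h
  · exact .refl
  · exact (h.mono_of_closed' dc hr' hab).to_reflTransGen

end Relation

section Multidigraph
variable {V A : Type*} {ψ : A → V × V} {B C E : Set A} {P : Set V} {s t : V}

theorem arcStep_mono (h : B ⊆ C) : ArcStep ψ B ≤ ArcStep ψ C :=
  fun _ _ ⟨a, ha, he⟩ ↦ ⟨a, h ha, he⟩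

theorem basin_mono (h : B ⊆ C) : basin ψ B s ⊆ basin ψ C s :=
  fun _ hv ↦ ReflTransGen.mono (arcStep_mono h) _ _ hv

theorem IsAcyclic.mono (h : B ⊆ C) (hC : IsAcyclic ψ C) : IsAcyclic ψ B :=
  fun v hv ↦ hC v (TransGen.mono (arcStep_mono h) _ _ hv)

theorem mem_of_arcStep_of_basin_eq (hs : basin ψ B s = P) :
    ∀ ⦃v w⦄, ArcStep ψ B v w → w ∈ P → v ∈ P := by
  subst hs
  exact fun _ _ h hw ↦ .head h hw

theorem arcStep_sdiff_of_iff (hC : C ⊆ arcsFromTo ψ P Pᶜ) :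
    ∀ ⦃v w⦄, ArcStep ψ B v w → (v ∈ P ↔ w ∈ P) → ArcStep ψ (B \ C) v w := by
  rintro v w ⟨a, ha, he⟩ hvw
  refine ⟨a, ⟨ha, fun haC ↦ ?_⟩, he⟩
  have hcross := hC haC
  simp only [arcsFromTo, he, mem_ofPred_eq, mem_compl_iff] at hcross
  tauto

theorem disjoint_arcsFromTo_of_basin_eq_compl (ht : basin ψ E t = Pᶜ) :
    Disjoint E (arcsFromTo ψ P Pᶜ) :=
  disjoint_left.2 fun a ha ⟨h₁, h₂⟩ ↦ mem_of_arcStep_of_basin_eq ht ⟨a, ha, rfl⟩ h₂ h₁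

variable [Finite A] {k : ℕ}

theorem union_mem_of_mem_Xset (hC : C ⊆ arcsFromTo ψ P Pᶜ)
    (hE : E ∈ Xset ψ s t P Pᶜ (k - C.ncard)) :
    E ∪ C ∈ {B ∈ Uset ψ s t k | basin ψ B s = P ∧ B ∩ arcsFromTo ψ P Pᶜ = C} := by
  obtain ⟨hacyc, hcard, hs, ht⟩ := hE
  have hcross := disjoint_arcsFromTo_of_basin_eq_compl ht
  have hEC : Disjoint E C := hcross.mono_right hC
  have hclosed : ∀ ⦃v w⦄, ArcStep ψ (E ∪ C) v w → w ∈ P → v ∈ P := by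
    rintro v w ⟨a, ha | ha, he⟩ hw
    · exact mem_of_arcStep_of_basin_eq hs ⟨a, ha, he⟩ hw
    · simpa [he] using (hC ha).1
  have hbasin : basin ψ (E ∪ C) s = P := by
    have hsP : s ∈ P := hs ▸ .refl
    exact subset_antisymm (fun v hv ↦ hv.closed' hclosed hsP) (hs ▸ basin_mono subset_union_left)
  refine ⟨⟨fun v hv ↦ ?_, ?_, ?_⟩, hbasin, ?_⟩
  · have hsdiff : (E ∪ C) \ C = E := hEC.sup_sdiff_cancel_right
    exact hacyc v (hsdiff ▸ hv.mono_of_closed' hclosed (arcStep_sdiff_of_iff hC) Iff.rfl)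
  · have hCk : C.ncard ≤ k := by omega
    rw [ncard_union_eq hEC]
    omega
  · refine eq_univ_of_forall fun v ↦ ?_
    by_cases hv : v ∈ P
    · exact .inl (hbasin ▸ hv)
    · exact .inr (basin_mono subset_union_left (ht ▸ hv))
  · rw [union_inter_distrib_right, hcross.inter_eq, inter_eq_left.2 hC, empty_union]

theorem sdiff_mem_Xset (hQ : (Pᶜ).Nonempty) (hC : C ⊆ arcsFromTo ψ P Pᶜ)
    (hB : B ∈ {B ∈ Uset ψ s t k | basin ψ B s = P ∧ B ∩ arcsFromTo ψ P Pᶜ = C}) :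
    B \ C ∈ Xset ψ s t P Pᶜ (k - C.ncard) := by
  obtain ⟨⟨hacyc, hcard, hcover⟩, hs, hBC⟩ := hB
  have hCB : C ⊆ B := hBC ▸ inter_subset_left
  have hclosed : ∀ ⦃v w⦄, ArcStep ψ B v w → w ∈ P → v ∈ P := mem_of_arcStep_of_basin_eq hs
  have hclosed_compl : ∀ ⦃v w⦄, ArcStep ψ (B \ C) v w → w ∈ Pᶜ → v ∈ Pᶜ := by
    rintro v w ⟨a, ⟨ha, haC⟩, he⟩ hw hv
    exact haC (hBC ▸ ⟨ha, by simp only [arcsFromTo, he, mem_ofPred_eq]; exact ⟨hv, hw⟩⟩)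
  have hcompl_sub : Pᶜ ⊆ basin ψ B t := fun v hv ↦
    (hcover ▸ mem_univ v : v ∈ basin ψ B s ∪ basin ψ B t).resolve_left (hs ▸ hv)
  have hsP : s ∈ P := hs ▸ .refl
  have htP : t ∈ Pᶜ := by
    obtain ⟨q, hq⟩ := hQ
    exact fun ht ↦ hq ((hcompl_sub hq).closed' hclosed ht)
  refine ⟨hacyc.mono sdiff_subset, ?_, ?_, ?_⟩
  · rw [ncard_sdiff hCB, hcard, Nat.cast_sub (hcard ▸ ncard_le_ncard hCB)]
  · refine subset_antisymm (hs ▸ basin_mono sdiff_subset) fun v hv ↦ ?_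
    exact ReflTransGen.mono_of_closed' hclosed (arcStep_sdiff_of_iff hC)
      (hs ▸ hv : v ∈ basin ψ B s) (iff_of_true hv hsP)
  · refine subset_antisymm (fun v hv ↦ hv.closed' hclosed_compl htP) fun v hv ↦ ?_
    exact ReflTransGen.mono_of_closed' hclosed (arcStep_sdiff_of_iff hC) (hcompl_sub hv)
      (iff_of_false hv htP)

end Multidigraph

theorem union_bijOn_and_card_eq_general {V A : Type*} [Fintype A]
    (ψ : A → V × V) (s t : V) (k : ℕ)
    (P Q : Set V) (hQ : Q.Nonempty)
    (hunion : P ∪ Q = Set.univ) (hdisj : P ∩ Q = ∅)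
    (C : Set A) (hC : C ⊆ arcsFromTo ψ P Q) :
    Set.BijOn (fun E : Set A => E ∪ C)
      (Xset ψ s t P Q ((k : ℤ) - C.ncard))
      {B ∈ Uset ψ s t k | basin ψ B s = P ∧ B ∩ arcsFromTo ψ P Q = C} ∧
    Set.InvOn (fun B : Set A => B \ C) (fun E : Set A => E ∪ C)
      (Xset ψ s t P Q ((k : ℤ) - C.ncard))
      {B ∈ Uset ψ s t k | basin ψ B s = P ∧ B ∩ arcsFromTo ψ P Q = C} ∧
    (Xset ψ s t P Q ((k : ℤ) - C.ncard)).ncard =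
      {B ∈ Uset ψ s t k | basin ψ B s = P ∧ B ∩ arcsFromTo ψ P Q = C}.ncard := by
  obtain rfl : Pᶜ = Q := compl_unique hdisj hunion
  have hinv : InvOn (fun B : Set A => B \ C) (fun E : Set A => E ∪ C)
      (Xset ψ s t P Pᶜ ((k : ℤ) - C.ncard))
      {B ∈ Uset ψ s t k | basin ψ B s = P ∧ B ∩ arcsFromTo ψ P Pᶜ = C} :=
    ⟨fun E hE ↦
      ((disjoint_arcsFromTo_of_basin_eq_compl hE.2.2.2).mono_right hC).sup_sdiff_cancel_right,
     fun B hB ↦ sdiff_union_of_subset (hB.2.2 ▸ inter_subset_left)⟩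
  have hbij := hinv.bijOn (fun E hE ↦ union_mem_of_mem_Xset hC hE)
    (fun B hB ↦ sdiff_mem_Xset hQ hC hB)
  exact ⟨hbij, hinv, hbij.ncard_eq⟩

/-- The map `E ↦ E ∪ C` is a bijection from `X_{k−|C|}^{P,Q}` onto
`{B ∈ U_k : S(B) = P and B ∩ A(P,Q) = C}`, with inverse `B ↦ B \ C`; in particular
these two sets have the same cardinality. -/
theorem union_bijOn_and_card_eq {V A : Type*} [Fintype V] [Fintype A]
    (ψ : A → V × V) (s t : V) (k : ℕ)
    (P Q : Set V) (hP : P.Nonempty) (hQ : Q.Nonempty)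
    (hunion : P ∪ Q = Set.univ) (hdisj : P ∩ Q = ∅)
    (C : Set A) (hC : C ⊆ arcsFromTo ψ P Q) :
    Set.BijOn (fun E : Set A => E ∪ C)
      (Xset ψ s t P Q ((k : ℤ) - C.ncard))
      {B ∈ Uset ψ s t k | basin ψ B s = P ∧ B ∩ arcsFromTo ψ P Q = C} ∧
    Set.InvOn (fun B : Set A => B \ C) (fun E : Set A => E ∪ C)
      (Xset ψ s t P Q ((k : ℤ) - C.ncard))
      {B ∈ Uset ψ s t k | basin ψ B s = P ∧ B ∩ arcsFromTo ψ P Q = C} ∧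
    (Xset ψ s t P Q ((k : ℤ) - C.ncard)).ncard =
      {B ∈ Uset ψ s t k | basin ψ B s = P ∧ B ∩ arcsFromTo ψ P Q = C}.ncard :=
  union_bijOn_and_card_eq_general ψ s t k P Q hQ hunion hdisj C hC
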